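/- Let G be a graph with a contraction sequence (G = G_1, ..., G_n) of width d, let k be a natural number, let I be a finite set, and for each α in I let ψ_α(x_1, ..., x_k, y) be a quantifier-free first-order formula in the language of graphs. Let i in [2, n], let π be a virtual i-profile with v in T (where v is the new vertex of G_i), let f' be compatible with π, let {π_j : j in [m]} be an f'-decomposition of π, and for each j in [m] let s^j be a solution of π_j. Then s = ⊕_{j∈[m]} s^j is a solution of π; moreover, if ν_j is the value of s^j in π_j, then the value of s in π equals Σ_{j∈[m]} ν_j. -/

import Mathlib

attribute [local instance 10] Classical.propDecidable

/-- A trigraph: a finite simple graph whose edges are partitioned into black and red edges. -/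
structure Trigraph (α : Type) where
  verts : Finset α
  black : α → α → Prop
  red : α → α → Prop
  black_symm : ∀ x y, black x y → black y x
  red_symm : ∀ x y, red x y → red y x
  black_irrefl : ∀ x, ¬ black x x
  red_irrefl : ∀ x, ¬ red x x
  black_red_disjoint : ∀ x y, black x y → ¬ red x y
  black_mem : ∀ x y, black x y → x ∈ verts ∧ y ∈ verts
  red_mem : ∀ x y, red x y → x ∈ verts ∧ y ∈ verts

namespace Trigraph

/-- The red graph of a trigraph. -/
def redGraph {α : Type} (G : Trigraph α) : SimpleGraph α where
  Adj := G.red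
  symm := ⟨fun x y h => G.red_symm x y h⟩
  loopless := ⟨fun x h => G.red_irrefl x h⟩

/-- The red degree of a vertex. -/
noncomputable def redDegree {α : Type} (G : Trigraph α) (x : α) : ℕ :=
  Set.ncard {y | G.red x y}

end Trigraph

variable {α : Type} [DecidableEq α]

/-- `Contracts G G' u v w` : the trigraph `G'` is obtained from the trigraph `G` by
contracting the two distinct vertices `u, v` into the new vertex `w`. -/
def Contracts (G G' : Trigraph α) (u v w : α) : Prop :=
  u ∈ G.verts ∧ v ∈ G.verts ∧ u ≠ v ∧ w ∉ G.verts ∧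
  G'.verts = insert w (G.verts \ {u, v}) ∧
  (∀ x ∈ G.verts \ {u, v}, (G'.black w x ↔ G.black u x ∧ G.black v x)) ∧
  (∀ x ∈ G.verts \ {u, v},
    (G'.red w x ↔ (¬ (G.black u x ∧ G.black v x)) ∧
      (G.black u x ∨ G.red u x ∨ G.black v x ∨ G.red v x))) ∧
  (∀ x, x ∈ G.verts \ {u, v} → ∀ y, y ∈ G.verts \ {u, v} →
    ((G'.black x y ↔ G.black x y) ∧ (G'.red x y ↔ G.red x y)))

/-- A contraction sequence `(G = G₁, …, Gₙ)` of a graph `G` (a trigraph with no red edges),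
together with the data of the contracted vertices `cu i, cv i` and the new vertex `cw i`
at each step `i ∈ [2, n]`. -/
structure ContractionSeq (α : Type) [DecidableEq α] (n : ℕ) where
  seq : ℕ → Trigraph α
  cu : ℕ → α
  cv : ℕ → α
  cw : ℕ → α
  one_le : 1 ≤ n
  init_noRed : ∀ x y, ¬ (seq 1).red x y
  last_single : (seq n).verts.card = 1
  step : ∀ i, 2 ≤ i → i ≤ n → Contracts (seq (i - 1)) (seq i) (cu i) (cv i) (cw i)

namespace ContractionSeq

variable {n : ℕ}

/-- The contraction sequence has width `d`: every vertex of every trigraph in the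
sequence has red degree at most `d`. -/
def HasWidth (C : ContractionSeq α n) (d : ℕ) : Prop :=
  ∀ i, 1 ≤ i → i ≤ n → ∀ x, (C.seq i).redDegree x ≤ d

/-- The bag `β(u)` of a vertex `u` of `Gᵢ`: the set of vertices of `G = G₁`
contracted into `u`. -/
def bag (C : ContractionSeq α n) : ℕ → α → Finset α
  | 0, x => {x}
  | 1, x => {x}
  | i + 2, x =>
    if x = C.cw (i + 2) then bag C (i + 1) (C.cu (i + 2)) ∪ bag C (i + 1) (C.cv (i + 2))
    else bag C (i + 1) x

/-- `β(T)`, the union of the bags of the vertices in `T`. -/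
def bags (C : ContractionSeq α n) (i : ℕ) (T : Finset α) : Finset α :=
  T.biUnion (C.bag i)

end ContractionSeq

variable {n : ℕ}

/-- A basic `i`-profile `(T, D)`. -/
def IsBasicProfile (C : ContractionSeq α n) (k d i : ℕ) (T D : Finset α) : Prop :=
  T ⊆ (C.seq i).verts ∧ T.card ≤ k * (d + 1) ∧
  (SimpleGraph.induce (↑T : Set α) (C.seq i).redGraph).Connected ∧
  D ⊆ T ∧ D.card ≤ k

/-- `T' = (T \ {v}) ∪ {u₁, u₂}` where `v = cw i` is the new vertex of `Gᵢ` and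
`u₁ = cu i`, `u₂ = cv i` are the vertices contracted into it. -/
def newT (C : ContractionSeq α n) (i : ℕ) (T : Finset α) : Finset α :=
  T.erase (C.cw i) ∪ {C.cu i, C.cv i}

/-- `D' ⊆ T'` is compatible with the basic `i`-profile `(T, D)`. -/
def DCompat (C : ContractionSeq α n) (k i : ℕ) (T D D' : Finset α) : Prop :=
  D' ⊆ newT C i T ∧
  D.erase (C.cw i) = (D'.erase (C.cu i)).erase (C.cv i) ∧
  D'.card ≤ k ∧
  (C.cw i ∈ D ↔ (C.cu i ∈ D' ∨ C.cv i ∈ D'))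

/-- A `D'`-decomposition `{(T₁, D₁), …, (Tₘ, Dₘ)}` of the basic `i`-profile `(T, D)`. -/
def IsDDecomp (C : ContractionSeq α n) (k d i : ℕ) (T D D' : Finset α)
    (m : ℕ) (Tj Dj : Fin m → Finset α) : Prop :=
  (∀ j, IsBasicProfile C k d (i - 1) (Tj j) (Dj j)) ∧
  (∀ j ℓ, j ≠ ℓ → Disjoint (Tj j) (Tj ℓ)) ∧
  newT C i T = Finset.univ.biUnion Tj ∧
  D' = Finset.univ.biUnion Dj ∧
  DCompat C k i T D D' ∧
  (∀ j ℓ, j ≠ ℓ → ∀ x ∈ Tj j, ∀ y ∈ Dj ℓ, ¬ (C.seq (i - 1)).red x y)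

/-- An extended `i`-profile `(T, D, M, f)`; the function `f : T → [0, k]` is modelled as a
function `f : α → ℕ` vanishing outside `T`. -/
def IsExtProfile (C : ContractionSeq α n) (k d i : ℕ) (T D M : Finset α) (f : α → ℕ) : Prop :=
  IsBasicProfile C k d i T D ∧ M ⊆ T ∧
  (∀ u, u ∉ T → f u = 0) ∧
  (∀ u ∈ T, f u ≤ k) ∧
  (∑ u ∈ T, f u) ≤ k ∧
  (∀ u ∈ T, f u ≤ (C.bag i u).card) ∧
  D = T.filter (fun u => f u ≠ 0)

/-- A solution of an extended `i`-profile `(T, D, M, f)`. -/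
def IsSolution (C : ContractionSeq α n) (i : ℕ) (T : Finset α) (f : α → ℕ)
    (S : Finset α) : Prop :=
  S ⊆ C.bags i T ∧ ∀ u ∈ T, f u = (S ∩ C.bag i u).card

/-- The closed neighborhood `N[S]` of `S` in the graph `G = G₁`. -/
def closedNbhd (C : ContractionSeq α n) (S : Finset α) : Set α :=
  ↑S ∪ {x | ∃ y ∈ S, (C.seq 1).black x y}

/-- The dominating-set-value `|N[S] ∩ β(M)|` of a solution `S`. -/
noncomputable def dsValue (C : ContractionSeq α n) (i : ℕ) (M S : Finset α) : ℕ :=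
  Set.ncard (closedNbhd C S ∩ ↑(C.bags i M))

/-- The vertex-cover-value of a solution `S`: the number of edges of `G` with one
endpoint in `S` and the other endpoint in `β(T)`. -/
noncomputable def vcValue (C : ContractionSeq α n) (i : ℕ) (T S : Finset α) : ℕ :=
  Set.ncard {e : Sym2 α | ∃ x y, e = s(x, y) ∧ (C.seq 1).black x y ∧ x ∈ S ∧ y ∈ C.bags i T}

/-- The function `f' : T' → [0, k]` is compatible with the extended `i`-profile
`(T, D, M, f)`. -/
def FCompat (C : ContractionSeq α n) (k i : ℕ) (T : Finset α) (f f' : α → ℕ) : Prop :=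
  (∀ u, u ∉ newT C i T → f' u = 0) ∧
  (∀ u ∈ newT C i T, f' u ≤ k) ∧
  f (C.cw i) = f' (C.cu i) + f' (C.cv i) ∧
  f' (C.cu i) ≤ (C.bag (i - 1) (C.cu i)).card ∧
  f' (C.cv i) ≤ (C.bag (i - 1) (C.cv i)).card ∧
  (∀ u ∈ T.erase (C.cw i), f' u = f u)

/-- `D' = {u ∈ T' : f'(u) ≠ 0}`. -/
def Dset (C : ContractionSeq α n) (i : ℕ) (T : Finset α) (f' : α → ℕ) : Finset α :=
  (newT C i T).filter (fun u => f' u ≠ 0)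

/-- `M-hat = (M \ {v}) ∪ {u₁, u₂}` if `v ∈ M`, and `M-hat = M` otherwise. -/
def Mhat (C : ContractionSeq α n) (i : ℕ) (M : Finset α) : Finset α :=
  if C.cw i ∈ M then M.erase (C.cw i) ∪ {C.cu i, C.cv i} else M

/-- `M' = {u ∈ M-hat : u has no black neighbor in D' in G_{i-1}}`. -/
noncomputable def Mset (C : ContractionSeq α n) (i : ℕ) (M D' : Finset α) : Finset α :=
  (Mhat C i M).filter (fun u => ¬ ∃ w ∈ D', (C.seq (i - 1)).black u w)

/-- An `f'`-decomposition `{(Tⱼ, Dⱼ, Mⱼ, fⱼ) : j ∈ [m]}` of the extended `i`-profile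
`(T, D, M, f)`. -/
def IsFDecomp (C : ContractionSeq α n) (k d i : ℕ) (T D M : Finset α) (f' : α → ℕ)
    (m : ℕ) (Tj Dj Mj : Fin m → Finset α) (fj : Fin m → α → ℕ) : Prop :=
  (∀ j, IsExtProfile C k d (i - 1) (Tj j) (Dj j) (Mj j) (fj j)) ∧
  (∀ j, ∀ u ∈ Tj j, fj j u = f' u) ∧
  Dset C i T f' = Finset.univ.biUnion Dj ∧
  Mset C i M (Dset C i T f') = Finset.univ.biUnion Mj ∧
  IsDDecomp C k d i T D (Dset C i T f') m Tj Dj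

/-- The adjacency relation of the expanded graph `G_π` of a virtual profile with
context `T`, virtual vertices `Vv` and virtual edges `E`. -/
def expAdj (C : ContractionSeq α n) (i : ℕ) (T Vv : Finset α) (E : Finset (Sym2 α))
    (x y : α) : Prop :=
  (x ∈ C.bags i T ∧ y ∈ C.bags i T ∧ (C.seq 1).black x y) ∨
  (x ∈ Vv ∧ y ∈ Vv ∧ s(x, y) ∈ E) ∨
  (y ∈ Vv ∧ ∃ u ∈ T, x ∈ C.bag i u ∧ s(u, y) ∈ E) ∨
  (x ∈ Vv ∧ ∃ u ∈ T, y ∈ C.bag i u ∧ s(u, x) ∈ E)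

/-- A virtual `i`-profile `(T, D, V, E, f, H)`.  The graph `H` is given by its labeling
`h : [k] → V(H)` (so `V(H)` is the range of `h`) and its edge set `HE`. -/
def IsVirtualProfile (C : ContractionSeq α n) (k d i : ℕ)
    (T D Vv : Finset α) (E : Finset (Sym2 α)) (f h : Fin k → α)
    (HE : Finset (Sym2 α)) : Prop :=
  IsBasicProfile C k d i T D ∧
  Vv.card ≤ k ∧
  (∀ x ∈ Vv, ∀ j, 1 ≤ j → j ≤ n → x ∉ (C.seq j).verts) ∧
  (∀ e ∈ E, ∃ u w, e = s(u, w) ∧ u ∈ Vv ∪ T ∧ w ∈ Vv) ∧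
  (∀ a, f a ∈ D ∪ Vv) ∧
  (∀ x ∈ D ∪ Vv, ∃ a, f a = x) ∧
  (∀ u ∈ D, (Finset.univ.filter (fun a => f a = u)).card ≤ (C.bag i u).card) ∧
  (∀ e ∈ HE, ¬ e.IsDiag ∧ ∀ x ∈ e, ∃ a, h a = x)

/-- A solution `(s₁, …, s_k)` of a virtual `i`-profile. -/
def IsVSolution (C : ContractionSeq α n) (i k : ℕ)
    (T D Vv : Finset α) (E : Finset (Sym2 α)) (f h : Fin k → α) (HE : Finset (Sym2 α))
    (sol : Fin k → α) : Prop :=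
  (∀ a, (f a ∈ Vv → sol a = f a) ∧ (f a ∈ D → sol a ∈ C.bag i (f a))) ∧
  (∀ a b, sol a = sol b ↔ h a = h b) ∧
  (∀ a b, expAdj C i T Vv E (sol a) (sol b) ↔ s(h a, h b) ∈ HE)

/-- Quantifier-free first-order formulas in the language of graphs with free variables
`x₁, …, x_k, y` (the variable `y` being the last one). -/
inductive QF (k : ℕ) : Type where
  | eq : Fin (k + 1) → Fin (k + 1) → QF k
  | adj : Fin (k + 1) → Fin (k + 1) → QF k
  | not : QF k → QF k
  | and : QF k → QF k → QF k
  | or : QF k → QF k → QF k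

/-- Satisfaction of a quantifier-free formula under an adjacency relation `A` and a
valuation `val` of the variables. -/
def QF.Sat {β : Type} {k : ℕ} (A : β → β → Prop) (val : Fin (k + 1) → β) : QF k → Prop
  | .eq a b => val a = val b
  | .adj a b => A (val a) (val b)
  | .not φ => ¬ QF.Sat A val φ
  | .and φ ψ => QF.Sat A val φ ∧ QF.Sat A val ψ
  | .or φ ψ => QF.Sat A val φ ∨ QF.Sat A val ψ

/-- The value `Σ_{α ∈ I} |{u ∈ β(T) : G_π ⊨ ψ_α(s₁, …, s_k, u)}|` of a solution of a
virtual `i`-profile. -/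
noncomputable def vValue {I : Type} [Fintype I] {k : ℕ} (ψ : I → QF k)
    (C : ContractionSeq α n) (i : ℕ) (T Vv : Finset α) (E : Finset (Sym2 α))
    (sol : Fin k → α) : ℕ :=
  ∑ a : I, Set.ncard {u : α | u ∈ C.bags i T ∧
    QF.Sat (expAdj C i T Vv E) (Fin.snoc sol u) (ψ a)}

/-- The function `f' : [k] → T' ∪ V` is compatible with the virtual `i`-profile. -/
def VFCompat (C : ContractionSeq α n) (i k : ℕ) (f f' : Fin k → α) : Prop :=
  ∀ a, (f a = C.cw i → (f' a = C.cu i ∨ f' a = C.cv i)) ∧ (f a ≠ C.cw i → f' a = f a)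

/-- `E' = {uw ∈ E : u, w ∈ T' ∪ V} ∪ {u₁w, u₂w : vw ∈ E}`. -/
def Eprime (C : ContractionSeq α n) (i : ℕ) (T Vv : Finset α) (E : Finset (Sym2 α)) :
    Set (Sym2 α) :=
  {e | e ∈ E ∧ ∀ x ∈ e, x ∈ newT C i T ∪ Vv} ∪
  {e | ∃ w, s(C.cw i, w) ∈ E ∧ (e = s(C.cu i, w) ∨ e = s(C.cv i, w))}

/-- `D' = range(f') ∩ T'`. -/
noncomputable def rangeD {k : ℕ} (C : ContractionSeq α n) (i : ℕ) (T : Finset α)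
    (f' : Fin k → α) : Finset α :=
  (newT C i T).filter (fun u => ∃ a, f' a = u)

/-- An `f'`-decomposition `{(Tⱼ, Dⱼ, Vⱼ, Eⱼ, fⱼ, H) : j ∈ [m]}` of the virtual
`i`-profile `(T, D, V, E, f, H)`. -/
def IsVDecomp (C : ContractionSeq α n) (k d i : ℕ)
    (T D Vv : Finset α) (E : Finset (Sym2 α)) (f h : Fin k → α) (HE : Finset (Sym2 α))
    (f' : Fin k → α) (m : ℕ) (Tj Dj Vj : Fin m → Finset α)
    (Ej : Fin m → Finset (Sym2 α)) (fj : Fin m → Fin k → α) : Prop :=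
  IsDDecomp C k d i T D (rangeD C i T f') m Tj Dj ∧
  (∀ j, IsVirtualProfile C k d (i - 1) (Tj j) (Dj j) (Vj j) (Ej j) (fj j) h HE) ∧
  (∀ j, Vj j =
    Vv ∪ (Finset.univ.filter (fun a => f' a ∈ rangeD C i T f' \ Dj j)).image h) ∧
  (∀ j a, (f' a ∈ Dj j ∪ Vv → fj j a = f' a) ∧
          (f' a ∈ rangeD C i T f' \ Dj j → fj j a = h a)) ∧
  (∀ j e, e ∈ Ej j ↔
    ((e ∈ Eprime C i T Vv E ∧ ∀ x ∈ e, x ∈ Vv ∪ Tj j) ∨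
     (∃ u a, e = s(u, h a) ∧ u ∈ Vv ∪ Tj j ∧ f' a ∈ rangeD C i T f' \ Dj j ∧
        (s(u, f' a) ∈ Eprime C i T Vv E ∨ (C.seq (i - 1)).black u (f' a))) ∨
     (∃ a b, e = s(h a, h b) ∧ s(h a, h b) ∈ HE ∧
        f' a ∈ rangeD C i T f' \ Dj j ∧ f' b ∈ rangeD C i T f' \ Dj j)))

/-- `⊕_{j ∈ [m]} sⱼ = s¹ ⊕ (s² ⊕ ( … ))`, where the `a`-th entry of `s¹ ⊕ s²` is
`s¹ a` if `f₁ a ∈ D₁` and `s² a` otherwise. -/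
noncomputable def bigOplus {k : ℕ} [Nonempty α] :
    (m : ℕ) → (Fin m → Fin k → α) → (Fin m → Fin k → α) → (Fin m → Finset α) →
      Fin k → α
  | 0, _, _, _ => fun _ => Classical.arbitrary α
  | 1, sol, _, _ => sol 0
  | m + 2, sol, f, D => fun a =>
      if f 0 a ∈ D 0 then sol 0 a
      else bigOplus (m + 1) (fun j => sol j.succ) (fun j => f j.succ)
        (fun j => D j.succ) a

/-!
Write `s = ⊕ⱼ sʲ`. If `f(a)` is a virtual vertex then `sʲ_a = f(a)` for every part `j`, and so
`s_a = f(a)`. Otherwise `f'(a)` lies in exactly one `Dⱼ`, `s_a = sʲ_a` lies in the bag of `f'(a)`,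
and every other part `l` sees `a` as the virtual vertex `h_a`: `a` is foreign to `l`.

Fix a part `j` and a vertex local to it, i.e. one of `β(Tⱼ) ∪ V`. It is adjacent in `G_π` to `s_b`
exactly when it is adjacent in `G_{πⱼ}` to `sʲ_b`. For `b` foreign to `j` this holds because no red
edge of `G_{i-1}` joins `Tⱼ` to `f'(b)`, so `G` is complete or anticomplete between the two bags,
which is what the black edges `u h_b` of `Eⱼ` record. Every `s_a` is local to some part, so the
equality and adjacency conditions of the `sʲ` pass to `s`. Since `β(T)` is the disjoint union of
the `β(Tⱼ)`, the count defining the value of `s` splits into the values of the `sʲ`.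
-/

namespace Trigraph

def Represents (G : Trigraph α) (B : α → Finset α) (R : α → α → Prop) : Prop :=
  ∀ x ∈ G.verts, ∀ y ∈ G.verts, x ≠ y →
    (G.black x y ↔ ∀ x' ∈ B x, ∀ y' ∈ B y, R x' y') ∧
    (G.black x y ∨ G.red x y ↔ ∃ x' ∈ B x, ∃ y' ∈ B y, R x' y')

end Trigraph

namespace Contracts

variable {G G' : Trigraph α} {u v w : α}

lemma mem_of_mem_of_ne (hc : Contracts G G' u v w) {x : α} (hx : x ∈ G'.verts)
    (hxw : x ≠ w) : x ∈ G.verts \ {u, v} := by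
  rw [hc.2.2.2.2.1, Finset.mem_insert] at hx
  exact hx.resolve_left hxw

lemma left_notMem (hc : Contracts G G' u v w) : u ∉ G'.verts := fun hu =>
  (Finset.mem_sdiff.1 (hc.mem_of_mem_of_ne hu (by rintro rfl; exact hc.2.2.2.1 hc.1))).2
    (by simp)

lemma right_notMem (hc : Contracts G G' u v w) : v ∉ G'.verts := fun hv =>
  (Finset.mem_sdiff.1 (hc.mem_of_mem_of_ne hv (by rintro rfl; exact hc.2.2.2.1 hc.2.1))).2
    (by simp)

lemma represents (hc : Contracts G G' u v w) {B : α → Finset α} {R : α → α → Prop}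
    (hR : ∀ x y, R x y → R y x) (hG : G.Represents B R) :
    G'.Represents (fun x => if x = w then B u ∪ B v else B x) R := by
  have ⟨hu, hv, _, _, _, hblack, hred, hold⟩ := hc
  have hnew : ∀ y ∈ G'.verts, y ≠ w →
      (G'.black w y ↔ ∀ x' ∈ B u ∪ B v, ∀ y' ∈ B y, R x' y') ∧
      (G'.black w y ∨ G'.red w y ↔ ∃ x' ∈ B u ∪ B v, ∃ y' ∈ B y, R x' y') := by
    intro y hy hyw
    have hy' := hc.mem_of_mem_of_ne hy hyw
    obtain ⟨hyG, hyuv⟩ := Finset.mem_sdiff.1 hy'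
    have hu' := hG u hu y hyG (by rintro rfl; simp at hyuv)
    have hv' := hG v hv y hyG (by rintro rfl; simp at hyuv)
    have hadj : (G'.black w y ∨ G'.red w y) ↔
        (G.black u y ∨ G.red u y) ∨ (G.black v y ∨ G.red v y) := by
      rw [hblack y hy', hred y hy']
      by_cases hbu : G.black u y <;> by_cases hbv : G.black v y <;> simp [hbu, hbv]
    rw [hadj, hu'.2, hv'.2, hblack y hy', hu'.1, hv'.1]
    simp only [Finset.mem_union, or_imp, forall_and, or_and_right, exists_or, and_self]
  intro x hx y hy hxy
  by_cases hxw : x = w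
  · subst hxw
    simpa [Ne.symm hxy] using hnew y hy (Ne.symm hxy)
  by_cases hyw : y = w
  · subst hyw
    have hb : G'.black x y ↔ G'.black y x := ⟨G'.black_symm _ _, G'.black_symm _ _⟩
    have hr : G'.red x y ↔ G'.red y x := ⟨G'.red_symm _ _, G'.red_symm _ _⟩
    simp only [if_neg hxw]
    rw [hb, hr, (hnew x hx hxw).2, (hnew x hx hxw).1]
    exact ⟨⟨fun H a ha b hb => hR _ _ (H b hb a ha), fun H a ha b hb => hR _ _ (H b hb a ha)⟩,
      ⟨fun ⟨a, ha, b, hb, h⟩ => ⟨b, hb, a, ha, hR _ _ h⟩,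
        fun ⟨a, ha, b, hb, h⟩ => ⟨b, hb, a, ha, hR _ _ h⟩⟩⟩
  have hx' := hc.mem_of_mem_of_ne hx hxw
  have hy' := hc.mem_of_mem_of_ne hy hyw
  simp only [if_neg hxw, if_neg hyw, (hold x hx' y hy').1, (hold x hx' y hy').2]
  exact hG x (Finset.mem_sdiff.1 hx').1 y (Finset.mem_sdiff.1 hy').1 hxy

end Contracts

namespace ContractionSeq

variable (C : ContractionSeq α n) {i : ℕ}

lemma bag_succ (hi : 1 ≤ i) (x : α) :
    C.bag (i + 1) x =
      if x = C.cw (i + 1) then C.bag i (C.cu (i + 1)) ∪ C.bag i (C.cv (i + 1)) else C.bag i x := by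
  obtain ⟨j, rfl⟩ : ∃ j, i = j + 1 := ⟨i - 1, by omega⟩
  rfl

lemma bag_of_two_le (hi : 2 ≤ i) (x : α) :
    C.bag i x = if x = C.cw i then C.bag (i - 1) (C.cu i) ∪ C.bag (i - 1) (C.cv i)
      else C.bag (i - 1) x := by
  obtain ⟨j, rfl⟩ : ∃ j, i = j + 1 := ⟨i - 1, by omega⟩
  exact C.bag_succ (by omega) x

lemma represents (hi : 1 ≤ i) (hin : i ≤ n) : (C.seq i).Represents (C.bag i) (C.seq 1).black := by
  induction i, hi using Nat.le_induction with
  | base =>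
    intro x _ y _ _
    simp only [bag, Finset.mem_singleton, forall_eq, exists_eq_left, or_iff_left_iff_imp,
      true_and]
    exact fun h => (C.init_noRed x y h).elim
  | succ i hi ih =>
    have hc := C.step (i + 1) (by omega) hin
    simp only [Nat.add_sub_cancel] at hc
    rw [show C.bag (i + 1) = _ from funext (C.bag_succ hi)]
    exact hc.represents (C.seq 1).black_symm (ih (by omega))

lemma bag_subset_verts (hi : 1 ≤ i) (hin : i ≤ n) {u : α} (hu : u ∈ (C.seq i).verts) :
    C.bag i u ⊆ (C.seq 1).verts := by
  induction i, hi using Nat.le_induction generalizing u with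
  | base => simpa [bag] using hu
  | succ i hi ih =>
    have hc := C.step (i + 1) (by omega) hin
    simp only [Nat.add_sub_cancel] at hc
    rw [C.bag_succ hi]
    split_ifs with hw
    · exact Finset.union_subset (ih (by omega) hc.1) (ih (by omega) hc.2.1)
    · exact ih (by omega) (Finset.mem_sdiff.1 (hc.mem_of_mem_of_ne hu hw)).1

lemma disjoint_bag (hi : 1 ≤ i) (hin : i ≤ n) {u w : α} (hu : u ∈ (C.seq i).verts)
    (hw : w ∈ (C.seq i).verts) (huw : u ≠ w) : Disjoint (C.bag i u) (C.bag i w) := by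
  induction i, hi using Nat.le_induction generalizing u w with
  | base => simpa [bag] using huw
  | succ i hi ih =>
    have hc := C.step (i + 1) (by omega) hin
    simp only [Nat.add_sub_cancel] at hc
    have hold : ∀ {x}, x ∈ (C.seq (i + 1)).verts → x ≠ C.cw (i + 1) →
        x ∈ (C.seq i).verts ∧ x ≠ C.cu (i + 1) ∧ x ≠ C.cv (i + 1) := fun hx hxw => by
      simpa using hc.mem_of_mem_of_ne hx hxw
    have hnew : ∀ {x}, x ∈ (C.seq (i + 1)).verts → x ≠ C.cw (i + 1) →
        Disjoint (C.bag i (C.cu (i + 1)) ∪ C.bag i (C.cv (i + 1))) (C.bag i x) := fun hx hxw =>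
      Finset.disjoint_union_left.2
        ⟨ih (by omega) hc.1 (hold hx hxw).1 (hold hx hxw).2.1.symm,
          ih (by omega) hc.2.1 (hold hx hxw).1 (hold hx hxw).2.2.symm⟩
    rw [C.bag_succ hi, C.bag_succ hi]
    split_ifs with huc hwc hwc
    · exact absurd (huc.trans hwc.symm) huw
    · exact hnew hw hwc
    · exact (hnew hu huc).symm
    · exact ih (by omega) (hold hu huc).1 (hold hw hwc).1 huw

lemma eq_of_mem_bag (hi : 1 ≤ i) (hin : i ≤ n) {u w x : α} (hu : u ∈ (C.seq i).verts)
    (hw : w ∈ (C.seq i).verts) (hxu : x ∈ C.bag i u) (hxw : x ∈ C.bag i w) : u = w := by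
  by_contra huw
  exact Finset.disjoint_left.1 (C.disjoint_bag hi hin hu hw huw) hxu hxw

lemma exists_mem_bag_iff {l : ℕ} (hl : 1 ≤ l) (hln : l ≤ n) {W : Finset α}
    (hW : W ⊆ (C.seq l).verts) {u x : α} (hu : u ∈ W) (hx : x ∈ C.bag l u) {P : α → Prop} : (∃ w ∈ W, x ∈ C.bag l w ∧ P w) ↔ P u := by
  refine ⟨fun ⟨w, hw, hxw, hP⟩ => ?_, fun hP => ⟨u, hu, hx, hP⟩⟩
  rwa [C.eq_of_mem_bag hl hln (hW hu) (hW hw) hx hxw]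

lemma black_iff_of_not_red (hi : 1 ≤ i) (hin : i ≤ n) {u w x y : α}
    (hu : u ∈ (C.seq i).verts) (hw : w ∈ (C.seq i).verts) (huw : u ≠ w)
    (hred : ¬ (C.seq i).red u w) (hx : x ∈ C.bag i u) (hy : y ∈ C.bag i w) :
    (C.seq 1).black x y ↔ (C.seq i).black u w := by
  have hrep := C.represents hi hin u hu w hw huw
  refine ⟨fun hxy => ?_, fun huw => hrep.1.1 huw x hx y hy⟩
  exact (hrep.2.2 ⟨x, hx, y, hy, hxy⟩).resolve_right hred

lemma mem_bags {j : ℕ} {T : Finset α} {x : α} : x ∈ C.bags j T ↔ ∃ u ∈ T, x ∈ C.bag j u :=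
  Finset.mem_biUnion

lemma bags_subset_verts (hi : 1 ≤ i) (hin : i ≤ n) {T : Finset α}
    (hT : T ⊆ (C.seq i).verts) : C.bags i T ⊆ (C.seq 1).verts :=
  Finset.biUnion_subset.2 fun _ hu => C.bag_subset_verts hi hin (hT hu)

lemma bags_eq_bags_newT (hi : 2 ≤ i) {T : Finset α} (hv : C.cw i ∈ T) :
    C.bags i T = C.bags (i - 1) (newT C i T) := by
  ext x
  simp only [mem_bags, newT, C.bag_of_two_le hi, Finset.mem_union, Finset.mem_erase,
    Finset.mem_insert, Finset.mem_singleton]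
  constructor
  · rintro ⟨u, huT, hx⟩
    split_ifs at hx with hu
    · exact (Finset.mem_union.1 hx).elim (fun hx => ⟨_, Or.inr (Or.inl rfl), hx⟩)
        (fun hx => ⟨_, Or.inr (Or.inr rfl), hx⟩)
    · exact ⟨u, Or.inl ⟨hu, huT⟩, hx⟩
  · rintro ⟨u, (⟨hu, huT⟩ | rfl | rfl), hx⟩
    · exact ⟨u, huT, by rwa [if_neg hu]⟩
    · exact ⟨_, hv, by simp [hx]⟩
    · exact ⟨_, hv, by simp [hx]⟩

def parent (i : ℕ) (u : α) : α := if u = C.cu i ∨ u = C.cv i then C.cw i else u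

lemma parent_mem {T : Finset α} (hv : C.cw i ∈ T) {u : α} (hu : u ∈ newT C i T) :
    C.parent i u ∈ T := by
  unfold parent newT at *
  split_ifs with h
  · exact hv
  · simp only [Finset.mem_union, Finset.mem_erase, Finset.mem_insert,
      Finset.mem_singleton] at hu
    tauto

lemma bag_subset_bag_parent (hi : 2 ≤ i) (hin : i ≤ n) {u : α}
    (hu : u ∈ (C.seq (i - 1)).verts) : C.bag (i - 1) u ⊆ C.bag i (C.parent i u) := by
  have hc := C.step i hi hin
  unfold parent
  split_ifs with h
  · rw [C.bag_of_two_le hi, if_pos rfl]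
    rcases h with rfl | rfl
    exacts [Finset.subset_union_left, Finset.subset_union_right]
  · rw [C.bag_of_two_le hi, if_neg (by rintro rfl; exact hc.2.2.2.1 hu)]

end ContractionSeq

lemma exists_bigOplus_eq [Nonempty α] {k : ℕ} :
    ∀ {m : ℕ} (sol f : Fin m → Fin k → α) (D : Fin m → Finset α) (a : Fin k), 0 < m →
      ∃ j, bigOplus m sol f D a = sol j a
  | 0, _, _, _, _, hm => absurd hm (lt_irrefl 0)
  | 1, _, _, _, _, _ => ⟨0, rfl⟩
  | m + 2, sol, f, D, a, _ => by
    by_cases h0 : f 0 a ∈ D 0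
    · exact ⟨0, if_pos h0⟩
    · obtain ⟨j, hj⟩ := exists_bigOplus_eq (m := m + 1) (fun j => sol j.succ) (fun j => f j.succ)
        (fun j => D j.succ) a (Nat.succ_pos m)
      exact ⟨j.succ, (if_neg h0).trans hj⟩

lemma bigOplus_eq_of_mem [Nonempty α] {k : ℕ} :
    ∀ {m : ℕ} (sol f : Fin m → Fin k → α) (D : Fin m → Finset α) (a : Fin k) (j₀ : Fin m),
      f j₀ a ∈ D j₀ → (∀ j < j₀, f j a ∉ D j) → bigOplus m sol f D a = sol j₀ a
  | 1, _, _, _, _, j₀, _, _ => by rw [Fin.fin_one_eq_zero j₀]; rfl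
  | m + 2, sol, f, D, a, j₀, hmem, hlt => by
    by_cases h0 : f 0 a ∈ D 0
    · obtain rfl : j₀ = 0 := by
        by_contra hj
        exact hlt 0 (Fin.pos_iff_ne_zero.2 hj) h0
      exact if_pos h0
    · obtain ⟨j, rfl⟩ : ∃ j : Fin (m + 1), j₀ = j.succ :=
        Fin.eq_succ_of_ne_zero (by rintro rfl; exact h0 hmem)
      exact (if_neg h0).trans (bigOplus_eq_of_mem (m := m + 1) (fun j => sol j.succ)
        (fun j => f j.succ) (fun j => D j.succ) a j hmem
        fun l hl => hlt l.succ (Fin.succ_lt_succ_iff.2 hl))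

section ExpandedGraph

variable (C : ContractionSeq α n) (i : ℕ) (W Vv : Finset α) (E : Finset (Sym2 α))

lemma expAdj_comm {x y : α} : expAdj C i W Vv E x y ↔ expAdj C i W Vv E y x := by
  have key : ∀ {x y}, expAdj C i W Vv E x y → expAdj C i W Vv E y x := by
    rintro x y (⟨hx, hy, h⟩ | ⟨hx, hy, h⟩ | h | h)
    · exact Or.inl ⟨hy, hx, (C.seq 1).black_symm _ _ h⟩
    · exact Or.inr (Or.inl ⟨hy, hx, by rwa [Sym2.eq_swap]⟩)
    · exact Or.inr (Or.inr (Or.inr h))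
    · exact Or.inr (Or.inr (Or.inl h))
  exact ⟨key, key⟩

variable {C i W Vv E}

lemma expAdj_bags_bags (hd : Disjoint (C.bags i W) Vv) {x y : α} (hx : x ∈ C.bags i W)
    (hy : y ∈ C.bags i W) : expAdj C i W Vv E x y ↔ (C.seq 1).black x y := by
  have hxV := Finset.disjoint_left.1 hd hx
  have hyV := Finset.disjoint_left.1 hd hy
  refine ⟨?_, fun h => Or.inl ⟨hx, hy, h⟩⟩
  rintro (⟨-, -, h⟩ | ⟨h, -⟩ | ⟨h, -⟩ | ⟨h, -⟩)
  exacts [h, (hxV h).elim, (hyV h).elim, (hxV h).elim]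

lemma expAdj_bags_virtual (hd : Disjoint (C.bags i W) Vv) {x p : α} (hx : x ∈ C.bags i W)
    (hp : p ∈ Vv) : expAdj C i W Vv E x p ↔ ∃ u ∈ W, x ∈ C.bag i u ∧ s(u, p) ∈ E := by
  have hxV := Finset.disjoint_left.1 hd hx
  refine ⟨?_, fun h => Or.inr (Or.inr (Or.inl ⟨hp, h⟩))⟩
  rintro (⟨-, h, -⟩ | ⟨h, -⟩ | ⟨-, h⟩ | ⟨h, -⟩)
  exacts [(Finset.disjoint_left.1 hd h hp).elim, (hxV h).elim, h, (hxV h).elim]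

lemma expAdj_virtual_virtual (hd : Disjoint (C.bags i W) Vv) {p q : α} (hp : p ∈ Vv)
    (hq : q ∈ Vv) : expAdj C i W Vv E p q ↔ s(p, q) ∈ E := by
  have hbags : ∀ {u x}, u ∈ W → x ∈ C.bag i u → x ∉ Vv := fun hu hx =>
    Finset.disjoint_left.1 hd (C.mem_bags.2 ⟨_, hu, hx⟩)
  refine ⟨?_, fun h => Or.inr (Or.inl ⟨hp, hq, h⟩)⟩
  rintro (⟨h, -⟩ | ⟨-, -, h⟩ | ⟨-, u, hu, h, -⟩ | ⟨-, u, hu, h, -⟩)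
  exacts [(Finset.disjoint_left.1 hd h hp).elim, h, (hbags hu h hp).elim, (hbags hu h hq).elim]

end ExpandedGraph

lemma QF.sat_congr {β γ : Type} {k : ℕ} {A : β → β → Prop} {A' : γ → γ → Prop}
    {val : Fin (k + 1) → β} {val' : Fin (k + 1) → γ}
    (heq : ∀ ξ η, val ξ = val η ↔ val' ξ = val' η)
    (hadj : ∀ ξ η, A (val ξ) (val η) ↔ A' (val' ξ) (val' η)) :
    ∀ φ : QF k, QF.Sat A val φ ↔ QF.Sat A' val' φ
  | .eq a b => heq a b
  | .adj a b => hadj a b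
  | .not φ => not_congr (QF.sat_congr heq hadj φ)
  | .and φ ψ => and_congr (QF.sat_congr heq hadj φ) (QF.sat_congr heq hadj ψ)
  | .or φ ψ => or_congr (QF.sat_congr heq hadj φ) (QF.sat_congr heq hadj ψ)

lemma QF.sat_snoc_congr {β γ : Type} {k : ℕ} {A : β → β → Prop} {A' : γ → γ → Prop}
    {s : Fin k → β} {s' : Fin k → γ} {u : β} {u' : γ}
    (heq : ∀ a b, s a = s b ↔ s' a = s' b) (hadj : ∀ a b, A (s a) (s b) ↔ A' (s' a) (s' b))
    (heq_last : ∀ a, s a = u ↔ s' a = u')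
    (hadj_left : ∀ a, A (s a) u ↔ A' (s' a) u') (hadj_right : ∀ a, A u (s a) ↔ A' u' (s' a))
    (hadj_last : A u u ↔ A' u' u') (φ : QF k) :
    QF.Sat A (Fin.snoc s u) φ ↔ QF.Sat A' (Fin.snoc s' u') φ := by
  refine QF.sat_congr (fun ξ η => ?_) (fun ξ η => ?_) φ <;>
    induction ξ using Fin.lastCases <;> induction η using Fin.lastCases <;>
    simp only [Fin.snoc_last, Fin.snoc_castSucc, eq_comm (a := u), eq_comm (a := u'), *]

lemma ncard_filter_biUnion {ι : Type} [Fintype ι] (S : ι → Finset α)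
    (hS : Pairwise fun j l => Disjoint (S j) (S l)) (P : α → Prop) (Q : ι → α → Prop)
    (hPQ : ∀ j, ∀ x ∈ S j, P x ↔ Q j x) :
    {x | x ∈ Finset.univ.biUnion S ∧ P x}.ncard = ∑ j, {x | x ∈ S j ∧ Q j x}.ncard := by
  have hfilter : ∀ (s : Finset α) (R : α → Prop), {x | x ∈ s ∧ R x}.ncard = (s.filter R).card :=
    fun s R => by rw [← Set.ncard_coe_finset]; congr 1; ext; simp
  rw [hfilter, Finset.filter_biUnion, Finset.card_biUnion
    fun j _ l _ hjl => Finset.disjoint_filter_filter (hS hjl)]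
  exact Finset.sum_congr rfl fun j _ => by
    rw [hfilter, Finset.filter_congr (hPQ j)]

structure OplusSetup (C : ContractionSeq α n) (k d i : ℕ) (T D Vv : Finset α)
    (E : Finset (Sym2 α)) (f h : Fin k → α) (HE : Finset (Sym2 α)) (f' : Fin k → α) (m : ℕ)
    (Tj Dj Vj : Fin m → Finset α) (Ej : Fin m → Finset (Sym2 α)) (fj sj : Fin m → Fin k → α) :
    Prop where
  two_le : 2 ≤ i
  le_n : i ≤ n
  profile : IsVirtualProfile C k d i T D Vv E f h HE
  cw_mem : C.cw i ∈ T
  compat : VFCompat C i k f f'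
  decomp : IsVDecomp C k d i T D Vv E f h HE f' m Tj Dj Vj Ej fj
  sol : ∀ j, IsVSolution C (i - 1) k (Tj j) (Dj j) (Vj j) (Ej j) (fj j) h HE (sj j)

namespace OplusSetup

variable {C : ContractionSeq α n} {k d i : ℕ} {T D Vv : Finset α} {E : Finset (Sym2 α)}
  {f h : Fin k → α} {HE : Finset (Sym2 α)} {f' : Fin k → α} {m : ℕ}
  {Tj Dj Vj : Fin m → Finset α} {Ej : Fin m → Finset (Sym2 α)} {fj sj : Fin m → Fin k → α}
  (S : OplusSetup C k d i T D Vv E f h HE f' m Tj Dj Vj Ej fj sj)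

include S

lemma one_le : 1 ≤ i := by have := S.two_le; omega

lemma one_le_sub_one : 1 ≤ i - 1 := by have := S.two_le; omega

lemma sub_one_le : i - 1 ≤ n := by have := S.le_n; omega

lemma contracts : Contracts (C.seq (i - 1)) (C.seq i) (C.cu i) (C.cv i) (C.cw i) :=
  C.step i S.two_le S.le_n

lemma T_subset : T ⊆ (C.seq i).verts := S.profile.1.1

lemma newT_subset : newT C i T ⊆ (C.seq (i - 1)).verts := by
  intro u hu
  simp only [newT, Finset.mem_union, Finset.mem_erase, Finset.mem_insert,
    Finset.mem_singleton] at hu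
  rcases hu with ⟨huw, huT⟩ | rfl | rfl
  · exact (Finset.mem_sdiff.1 (S.contracts.mem_of_mem_of_ne (S.T_subset huT) huw)).1
  exacts [S.contracts.1, S.contracts.2.1]

lemma Tj_subset_newT (j : Fin m) : Tj j ⊆ newT C i T := by
  rw [S.decomp.1.2.2.1]
  exact Finset.subset_biUnion_of_mem Tj (Finset.mem_univ j)

lemma Tj_subset (j : Fin m) : Tj j ⊆ (C.seq (i - 1)).verts :=
  (S.Tj_subset_newT j).trans S.newT_subset

lemma Dj_subset_Tj (j : Fin m) : Dj j ⊆ Tj j := (S.decomp.2.1 j).1.2.2.2.1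

lemma disjoint_Tj {j l : Fin m} (hjl : j ≠ l) : Disjoint (Tj j) (Tj l) := S.decomp.1.2.1 j l hjl

lemma Dj_subset_rangeD (j : Fin m) : Dj j ⊆ rangeD C i T f' := by
  rw [S.decomp.1.2.2.2.1]
  exact Finset.subset_biUnion_of_mem Dj (Finset.mem_univ j)

lemma exists_mem_Dj {x : α} (hx : x ∈ rangeD C i T f') : ∃ j, x ∈ Dj j := by
  rw [S.decomp.1.2.2.2.1] at hx
  simpa using hx

lemma rangeD_subset : rangeD C i T f' ⊆ (C.seq (i - 1)).verts :=
  (Finset.filter_subset _ _).trans S.newT_subset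

lemma pos : 0 < m := by
  have hcu : C.cu i ∈ newT C i T := by simp [newT]
  rw [S.decomp.1.2.2.1] at hcu
  obtain ⟨j, -, -⟩ := Finset.mem_biUnion.1 hcu
  exact j.pos

lemma notMem_verts_of_mem_Vv {p : α} (hp : p ∈ Vv) {l : ℕ} (hl : 1 ≤ l) (hln : l ≤ n) :
    p ∉ (C.seq l).verts :=
  S.profile.2.2.1 p hp l hl hln

lemma notMem_verts_of_mem_Vj {j : Fin m} {p : α} (hp : p ∈ Vj j) {l : ℕ} (hl : 1 ≤ l)
    (hln : l ≤ n) : p ∉ (C.seq l).verts :=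
  (S.decomp.2.1 j).2.2.1 p hp l hl hln

lemma Vv_subset_Vj (j : Fin m) : Vv ⊆ Vj j := by
  rw [S.decomp.2.2.1 j]
  exact Finset.subset_union_left

lemma h_mem_Vj {j : Fin m} {a : Fin k} (ha : f' a ∈ rangeD C i T f' \ Dj j) : h a ∈ Vj j := by
  rw [S.decomp.2.2.1 j]
  exact Finset.mem_union_right _ (Finset.mem_image_of_mem h (by simpa using ha))

lemma bags_eq : C.bags i T = Finset.univ.biUnion fun j => C.bags (i - 1) (Tj j) := by
  rw [C.bags_eq_bags_newT S.two_le S.cw_mem, S.decomp.1.2.2.1, ContractionSeq.bags,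
    Finset.biUnion_biUnion]
  rfl

lemma bags_Tj_subset (j : Fin m) : C.bags (i - 1) (Tj j) ⊆ C.bags i T := by
  rw [S.bags_eq]
  exact Finset.subset_biUnion_of_mem (fun j => C.bags (i - 1) (Tj j)) (Finset.mem_univ j)

lemma bags_subset_verts : C.bags i T ⊆ (C.seq 1).verts :=
  C.bags_subset_verts S.one_le S.le_n S.T_subset

lemma bags_Tj_subset_verts (j : Fin m) : C.bags (i - 1) (Tj j) ⊆ (C.seq 1).verts :=
  (S.bags_Tj_subset j).trans S.bags_subset_verts

lemma disjoint_bags_Vv : Disjoint (C.bags i T) Vv :=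
  Finset.disjoint_right.2 fun _ hp hx =>
    S.notMem_verts_of_mem_Vv hp le_rfl C.one_le (S.bags_subset_verts hx)

lemma disjoint_bags_Vj (j : Fin m) : Disjoint (C.bags (i - 1) (Tj j)) (Vj j) :=
  Finset.disjoint_right.2 fun _ hp hx =>
    S.notMem_verts_of_mem_Vj hp le_rfl C.one_le (S.bags_Tj_subset_verts j hx)

lemma pairwise_disjoint_bags :
    Pairwise fun j l => Disjoint (C.bags (i - 1) (Tj j)) (C.bags (i - 1) (Tj l)) := by
  intro j l hjl
  refine Finset.disjoint_left.2 fun x hxj hxl => ?_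
  obtain ⟨u, hu, hxu⟩ := C.mem_bags.1 hxj
  obtain ⟨w, hw, hxw⟩ := C.mem_bags.1 hxl
  obtain rfl := C.eq_of_mem_bag S.one_le_sub_one S.sub_one_le (S.Tj_subset j hu)
    (S.Tj_subset l hw) hxu hxw
  exact Finset.disjoint_left.1 (S.disjoint_Tj hjl) hu hw

lemma mem_D_or_mem_Vv (a : Fin k) : f a ∈ D ∨ f a ∈ Vv :=
  Finset.mem_union.1 (S.profile.2.2.2.2.1 a)

lemma f'_eq_of_mem_Vv {a : Fin k} (ha : f a ∈ Vv) : f' a = f a :=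
  (S.compat a).2 fun hcw => S.notMem_verts_of_mem_Vv ha S.one_le S.le_n
    (hcw ▸ S.T_subset S.cw_mem)

lemma sj_eq_of_mem_Vv {a : Fin k} (ha : f a ∈ Vv) (j : Fin m) : sj j a = f a := by
  have hfj : fj j a = f a := by
    rw [(S.decomp.2.2.2.1 j a).1 (by simp [S.f'_eq_of_mem_Vv ha, ha]), S.f'_eq_of_mem_Vv ha]
  rw [((S.sol j).1 a).1 (hfj ▸ S.Vv_subset_Vj j ha), hfj]

lemma f'_mem_rangeD {a : Fin k} (ha : f a ∈ D) : f' a ∈ rangeD C i T f' := by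
  refine Finset.mem_filter.2 ⟨?_, a, rfl⟩
  by_cases hcw : f a = C.cw i
  · rcases (S.compat a).1 hcw with h' | h' <;> simp [newT, h']
  · rw [(S.compat a).2 hcw]
    exact Finset.mem_union_left _ (Finset.mem_erase.2 ⟨hcw, S.profile.1.2.2.2.1 ha⟩)

lemma parent_f' {a : Fin k} (ha : f a ∈ D) : C.parent i (f' a) = f a := by
  have hfa : f a ∈ (C.seq i).verts := S.T_subset (S.profile.1.2.2.2.1 ha)
  by_cases hcw : f a = C.cw i
  · rw [hcw, ContractionSeq.parent, if_pos ((S.compat a).1 hcw)]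
  · rw [(S.compat a).2 hcw, ContractionSeq.parent, if_neg]
    rintro (h' | h') <;> rw [h'] at hfa
    exacts [S.contracts.left_notMem hfa, S.contracts.right_notMem hfa]

lemma fj_eq_of_mem_Dj {j : Fin m} {a : Fin k} (ha : f' a ∈ Dj j) : fj j a = f' a :=
  (S.decomp.2.2.2.1 j a).1 (Finset.mem_union_left _ ha)

lemma sj_mem_bag {j : Fin m} {a : Fin k} (ha : f' a ∈ Dj j) : sj j a ∈ C.bag (i - 1) (f' a) := by
  have := ((S.sol j).1 a).2 (by rwa [S.fj_eq_of_mem_Dj ha])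
  rwa [S.fj_eq_of_mem_Dj ha] at this

lemma sj_mem_bags {j : Fin m} {a : Fin k} (ha : f' a ∈ Dj j) :
    sj j a ∈ C.bags (i - 1) (Tj j) :=
  C.mem_bags.2 ⟨_, S.Dj_subset_Tj j ha, S.sj_mem_bag ha⟩

lemma sj_eq_h {j : Fin m} {a : Fin k} (ha : f' a ∈ rangeD C i T f' \ Dj j) : sj j a = h a := by
  have hfj : fj j a = h a := (S.decomp.2.2.2.1 j a).2 ha
  rw [((S.sol j).1 a).1 (hfj ▸ S.h_mem_Vj ha), hfj]

lemma h_notMem_verts {j : Fin m} {a : Fin k} (ha : f' a ∈ rangeD C i T f' \ Dj j) {l : ℕ}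
    (hl : 1 ≤ l) (hln : l ≤ n) : h a ∉ (C.seq l).verts :=
  S.notMem_verts_of_mem_Vj (S.h_mem_Vj ha) hl hln

lemma mem_sdiff_Dj {j l : Fin m} (hjl : j ≠ l) {x : α} (hx : x ∈ Dj l) :
    x ∈ rangeD C i T f' \ Dj j :=
  Finset.mem_sdiff.2 ⟨S.Dj_subset_rangeD l hx, fun hxj =>
    Finset.disjoint_left.1 (S.disjoint_Tj hjl) (S.Dj_subset_Tj j hxj) (S.Dj_subset_Tj l hx)⟩

lemma oplus_eq_of_mem_Dj [Nonempty α] {j : Fin m} {a : Fin k} (ha : f' a ∈ Dj j) :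
    bigOplus m sj fj Dj a = sj j a := by
  refine bigOplus_eq_of_mem sj fj Dj a j (by rwa [S.fj_eq_of_mem_Dj ha]) fun l hl hmem => ?_
  have hla := S.mem_sdiff_Dj hl.ne ha
  rw [(S.decomp.2.2.2.1 l a).2 hla] at hmem
  exact S.h_notMem_verts hla S.one_le_sub_one S.sub_one_le
    (S.Tj_subset l (S.Dj_subset_Tj l hmem))

lemma oplus_eq_of_mem_Vv [Nonempty α] {a : Fin k} (ha : f a ∈ Vv) :
    bigOplus m sj fj Dj a = f a := by
  obtain ⟨j, hj⟩ := exists_bigOplus_eq sj fj Dj a S.pos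
  rw [hj, S.sj_eq_of_mem_Vv ha]

lemma h_notMem_Vv {j : Fin m} {b : Fin k} (hb : f' b ∈ rangeD C i T f' \ Dj j) : h b ∉ Vv := by
  -- `h b = f c` would force `h c = h b` (read off in part `j`), hence `sˡ c = sˡ b` in the part
  -- `l` of `b`, equating a virtual vertex with a vertex of `G`.
  intro hhb
  obtain ⟨l, hl⟩ := S.exists_mem_Dj (Finset.mem_sdiff.1 hb).1
  obtain ⟨c, hc⟩ := S.profile.2.2.2.2.2.1 (h b) (Finset.mem_union_right _ hhb)
  have hcV : f c ∈ Vv := hc ▸ hhb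
  have hcb : h c = h b :=
    ((S.sol j).2.1 c b).1 (by rw [S.sj_eq_of_mem_Vv hcV, S.sj_eq_h hb, hc])
  have hsl : sj l c = sj l b := ((S.sol l).2.1 c b).2 hcb
  rw [S.sj_eq_of_mem_Vv hcV, hc] at hsl
  exact S.notMem_verts_of_mem_Vv hhb le_rfl C.one_le
    (hsl ▸ S.bags_Tj_subset_verts l (S.sj_mem_bags hl))

lemma h_notMem_Vv_union_Tj {j : Fin m} {b : Fin k} (hb : f' b ∈ rangeD C i T f' \ Dj j) :
    h b ∉ Vv ∪ Tj j := by
  rw [Finset.mem_union, not_or]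
  exact ⟨S.h_notMem_Vv hb, fun hT => S.h_notMem_verts hb S.one_le_sub_one S.sub_one_le
    (S.Tj_subset j hT)⟩

lemma f'_eq_of_h_eq {a b : Fin k} (ha : f' a ∈ rangeD C i T f') (hb : f' b ∈ rangeD C i T f')
    (hab : h a = h b) : f' a = f' b := by
  obtain ⟨j, hj⟩ := S.exists_mem_Dj ha
  obtain ⟨l, hl⟩ := S.exists_mem_Dj hb
  have hs : sj j a = sj j b := ((S.sol j).2.1 a b).2 hab
  by_cases hjl : j = l
  · subst hjl
    exact C.eq_of_mem_bag S.one_le_sub_one S.sub_one_le (S.rangeD_subset ha)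
      (S.rangeD_subset hb) (S.sj_mem_bag hj) (hs ▸ S.sj_mem_bag hl)
  · have hbj := S.mem_sdiff_Dj hjl hl
    rw [S.sj_eq_h hbj] at hs
    exact (S.h_notMem_verts hbj le_rfl C.one_le
      (hs ▸ S.bags_Tj_subset_verts j (S.sj_mem_bags hj))).elim

lemma mem_Vv_union_T_of_mem_E {e : Sym2 α} (he : e ∈ E) {x : α} (hx : x ∈ e) : x ∈ Vv ∪ T := by
  obtain ⟨u, w, rfl, hu, hw⟩ := S.profile.2.2.2.1 e he
  rcases Sym2.mem_iff.1 hx with rfl | rfl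
  exacts [hu, Finset.mem_union_left _ hw]

lemma mem_Vv_of_mem_E {x y : α} (he : s(x, y) ∈ E) (hx : x ∉ Vv) : y ∈ Vv := by
  obtain ⟨u, w, heq, -, hw⟩ := S.profile.2.2.2.1 _ he
  rcases Sym2.eq_iff.1 heq with ⟨-, rfl⟩ | ⟨rfl, -⟩
  exacts [hw, (hx hw).elim]

lemma notMem_Vv_of_mem_verts {x : α} (hx : x ∈ (C.seq (i - 1)).verts) : x ∉ Vv :=
  fun hxV => S.notMem_verts_of_mem_Vv hxV S.one_le_sub_one S.sub_one_le hx

lemma notMem_Vv_union_T_of_contracted {x : α} (hx : x = C.cu i ∨ x = C.cv i) :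
    x ∉ Vv ∪ T := by
  have hx' : x ∈ (C.seq (i - 1)).verts := by
    rcases hx with rfl | rfl
    exacts [S.contracts.1, S.contracts.2.1]
  rw [Finset.mem_union, not_or]
  refine ⟨S.notMem_Vv_of_mem_verts hx', fun hxT => ?_⟩
  rcases hx with rfl | rfl
  exacts [S.contracts.left_notMem (S.T_subset hxT), S.contracts.right_notMem (S.T_subset hxT)]

lemma exists_mem_Vv_of_mem_Eprime {e : Sym2 α} (he : e ∈ Eprime C i T Vv E) :
    ∃ x ∈ e, x ∈ Vv := by
  rcases he with ⟨he, -⟩ | ⟨w, hw, rfl | rfl⟩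
  · obtain ⟨u, w, rfl, -, hw⟩ := S.profile.2.2.2.1 e he
    exact ⟨w, Sym2.mem_mk_right u w, hw⟩
  all_goals
    refine ⟨w, Sym2.mem_mk_right _ w, S.mem_Vv_of_mem_E hw fun hcw => ?_⟩
    exact S.notMem_verts_of_mem_Vv hcw S.one_le S.le_n (S.T_subset S.cw_mem)

lemma mem_Eprime_iff_of_mem_Vv {p q : α} (hp : p ∈ Vv) (hq : q ∈ Vv) :
    s(p, q) ∈ Eprime C i T Vv E ↔ s(p, q) ∈ E := by
  have hVv : ∀ x ∈ s(p, q), x ∈ Vv := fun x hx => by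
    rcases Sym2.mem_iff.1 hx with rfl | rfl <;> assumption
  refine ⟨?_, fun he => Or.inl ⟨he, fun x hx => Finset.mem_union_right _ (hVv x hx)⟩⟩
  rintro (⟨he, -⟩ | ⟨w, -, heq | heq⟩)
  · exact he
  · exact (S.notMem_Vv_of_mem_verts S.contracts.1 (hVv _ (heq ▸ Sym2.mem_mk_left _ _))).elim
  · exact (S.notMem_Vv_of_mem_verts S.contracts.2.1
      (hVv _ (heq ▸ Sym2.mem_mk_left _ _))).elim

lemma mem_Eprime_iff_parent {u p : α} (hu : u ∈ newT C i T) (hp : p ∈ Vv) :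
    s(u, p) ∈ Eprime C i T Vv E ↔ s(C.parent i u, p) ∈ E := by
  have hcu : p ≠ C.cu i := fun hpu => S.notMem_Vv_of_mem_verts S.contracts.1 (hpu ▸ hp)
  have hcv : p ≠ C.cv i := fun hpv => S.notMem_Vv_of_mem_verts S.contracts.2.1 (hpv ▸ hp)
  unfold ContractionSeq.parent
  by_cases hc : u = C.cu i ∨ u = C.cv i
  · rw [if_pos hc]
    refine ⟨?_, fun he => Or.inr ⟨p, he, by rcases hc with rfl | rfl <;> simp⟩⟩
    rintro (⟨he, -⟩ | ⟨w, hw, heq | heq⟩)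
    · exact (S.notMem_Vv_union_T_of_contracted hc
        (S.mem_Vv_union_T_of_mem_E he (Sym2.mem_mk_left u p))).elim
    all_goals
      rcases Sym2.eq_iff.1 heq with ⟨-, rfl⟩ | ⟨-, rfl⟩
      · exact hw
      · simp at hcu hcv
  · rw [if_neg hc]
    refine ⟨?_, fun he => Or.inl ⟨he, fun x hx => ?_⟩⟩
    · rintro (⟨he, -⟩ | ⟨w, -, heq | heq⟩)
      · exact he
      all_goals
        rcases Sym2.eq_iff.1 heq with ⟨rfl, -⟩ | ⟨-, rfl⟩
        · simp at hc
        · simp at hcu hcv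
    · rcases Sym2.mem_iff.1 hx with rfl | rfl
      exacts [Finset.mem_union_left _ hu, Finset.mem_union_right _ hp]

lemma mem_Ej_iff_of_subset {j : Fin m} {e : Sym2 α} (he : ∀ x ∈ e, x ∈ Vv ∪ Tj j) :
    e ∈ Ej j ↔ e ∈ Eprime C i T Vv E := by
  rw [S.decomp.2.2.2.2 j e]
  refine ⟨?_, fun h' => Or.inl ⟨h', he⟩⟩
  rintro (⟨h', -⟩ | ⟨u, a, rfl, -, ha, -⟩ | ⟨a, b, rfl, -, ha, -⟩)
  · exact h'
  · exact (S.h_notMem_Vv_union_Tj ha (he _ (Sym2.mem_mk_right u _))).elim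
  · exact (S.h_notMem_Vv_union_Tj ha (he _ (Sym2.mem_mk_left _ _))).elim

lemma mem_Ej_iff_of_foreign {j : Fin m} {u : α} (hu : u ∈ Vv ∪ Tj j) {b : Fin k}
    (hb : f' b ∈ rangeD C i T f' \ Dj j) :
    s(u, h b) ∈ Ej j ↔ s(u, f' b) ∈ Eprime C i T Vv E ∨ (C.seq (i - 1)).black u (f' b) := by
  have hforeign : ∀ a, f' a ∈ rangeD C i T f' \ Dj j → u ≠ h a := fun a ha hua =>
    S.h_notMem_Vv_union_Tj ha (hua ▸ hu)
  rw [S.decomp.2.2.2.2 j]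
  refine ⟨?_, fun hc => Or.inr (Or.inl ⟨u, b, rfl, hu, hb, hc⟩)⟩
  rintro (⟨-, hmem⟩ | ⟨u', a, heq, -, ha, hc⟩ | ⟨a, a', heq, -, ha, ha'⟩)
  · exact (S.h_notMem_Vv_union_Tj hb (hmem _ (Sym2.mem_mk_right u _))).elim
  · rcases Sym2.eq_iff.1 heq with ⟨rfl, hab⟩ | ⟨hua, -⟩
    · rwa [S.f'_eq_of_h_eq (Finset.mem_sdiff.1 ha).1 (Finset.mem_sdiff.1 hb).1 hab.symm] at hc
    · exact (hforeign a ha hua).elim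
  · rcases Sym2.eq_iff.1 heq with ⟨hua, -⟩ | ⟨hua, -⟩
    exacts [(hforeign a ha hua).elim, (hforeign a' ha' hua).elim]

lemma expAdj_bags_bags_iff {j : Fin m} {x y : α} (hx : x ∈ C.bags (i - 1) (Tj j))
    (hy : y ∈ C.bags (i - 1) (Tj j)) :
    expAdj C i T Vv E x y ↔ expAdj C (i - 1) (Tj j) (Vj j) (Ej j) x y := by
  rw [expAdj_bags_bags S.disjoint_bags_Vv (S.bags_Tj_subset j hx) (S.bags_Tj_subset j hy),
    expAdj_bags_bags (S.disjoint_bags_Vj j) hx hy]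

lemma expAdj_bags_virtual_iff {j : Fin m} {x p : α} (hx : x ∈ C.bags (i - 1) (Tj j))
    (hp : p ∈ Vv) : expAdj C i T Vv E x p ↔ expAdj C (i - 1) (Tj j) (Vj j) (Ej j) x p := by
  obtain ⟨u, hu, hxu⟩ := C.mem_bags.1 hx
  have hup : x ∈ C.bag i (C.parent i u) :=
    C.bag_subset_bag_parent S.two_le S.le_n (S.Tj_subset j hu) hxu
  rw [expAdj_bags_virtual S.disjoint_bags_Vv (S.bags_Tj_subset j hx) hp,
    C.exists_mem_bag_iff S.one_le S.le_n S.T_subset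
      (C.parent_mem S.cw_mem (S.Tj_subset_newT j hu)) hup,
    expAdj_bags_virtual (S.disjoint_bags_Vj j) hx (S.Vv_subset_Vj j hp),
    C.exists_mem_bag_iff S.one_le_sub_one S.sub_one_le (S.Tj_subset j) hu hxu,
    S.mem_Ej_iff_of_subset, S.mem_Eprime_iff_parent (S.Tj_subset_newT j hu) hp]
  intro y hy
  rcases Sym2.mem_iff.1 hy with rfl | rfl
  exacts [Finset.mem_union_right _ hu, Finset.mem_union_left _ hp]

lemma expAdj_virtual_virtual_iff {j : Fin m} {p q : α} (hp : p ∈ Vv) (hq : q ∈ Vv) :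
    expAdj C i T Vv E p q ↔ expAdj C (i - 1) (Tj j) (Vj j) (Ej j) p q := by
  rw [expAdj_virtual_virtual S.disjoint_bags_Vv hp hq,
    expAdj_virtual_virtual (S.disjoint_bags_Vj j) (S.Vv_subset_Vj j hp) (S.Vv_subset_Vj j hq),
    S.mem_Ej_iff_of_subset, S.mem_Eprime_iff_of_mem_Vv hp hq]
  intro y hy
  rcases Sym2.mem_iff.1 hy with rfl | rfl <;> exact Finset.mem_union_left _ ‹_›

lemma bag_f'_subset_bags {b : Fin k} (hb : f' b ∈ rangeD C i T f') :
    C.bag (i - 1) (f' b) ⊆ C.bags i T := by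
  rw [C.bags_eq_bags_newT S.two_le S.cw_mem]
  exact Finset.subset_biUnion_of_mem _ (Finset.mem_filter.1 hb).1

lemma expAdj_bags_foreign_iff {j : Fin m} {x y : α} (hx : x ∈ C.bags (i - 1) (Tj j)) {b : Fin k}
    (hb : f' b ∈ rangeD C i T f' \ Dj j) (hy : y ∈ C.bag (i - 1) (f' b)) :
    expAdj C i T Vv E x y ↔ expAdj C (i - 1) (Tj j) (Vj j) (Ej j) x (h b) := by
  obtain ⟨hbD, hbj⟩ := Finset.mem_sdiff.1 hb
  obtain ⟨u, hu, hxu⟩ := C.mem_bags.1 hx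
  obtain ⟨l, hl⟩ := S.exists_mem_Dj hbD
  have hjl : j ≠ l := by rintro rfl; exact hbj hl
  have hub : u ≠ f' b := by
    rintro rfl; exact Finset.disjoint_left.1 (S.disjoint_Tj hjl) hu (S.Dj_subset_Tj l hl)
  rw [expAdj_bags_bags S.disjoint_bags_Vv (S.bags_Tj_subset j hx) (S.bag_f'_subset_bags hbD hy),
    C.black_iff_of_not_red S.one_le_sub_one S.sub_one_le (S.Tj_subset j hu)
      (S.rangeD_subset hbD) hub (S.decomp.1.2.2.2.2.2 j l hjl u hu _ hl) hxu hy,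
    expAdj_bags_virtual (S.disjoint_bags_Vj j) hx (S.h_mem_Vj hb),
    C.exists_mem_bag_iff S.one_le_sub_one S.sub_one_le (S.Tj_subset j) hu hxu,
    S.mem_Ej_iff_of_foreign (Finset.mem_union_right _ hu) hb, iff_or_self]
  intro he
  obtain ⟨z, hz, hzV⟩ := S.exists_mem_Vv_of_mem_Eprime he
  rcases Sym2.mem_iff.1 hz with rfl | rfl
  exacts [(S.notMem_Vv_of_mem_verts (S.Tj_subset j hu) hzV).elim,
    (S.notMem_Vv_of_mem_verts (S.rangeD_subset hbD) hzV).elim]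

lemma expAdj_virtual_foreign_iff {j : Fin m} {p y : α} (hp : p ∈ Vv) {b : Fin k}
    (hb : f' b ∈ rangeD C i T f' \ Dj j) (hy : y ∈ C.bag (i - 1) (f' b)) :
    expAdj C i T Vv E p y ↔ expAdj C (i - 1) (Tj j) (Vj j) (Ej j) p (h b) := by
  have hbD := (Finset.mem_sdiff.1 hb).1
  have hbT := (Finset.mem_filter.1 hbD).1
  rw [expAdj_comm, expAdj_bags_virtual S.disjoint_bags_Vv (S.bag_f'_subset_bags hbD hy) hp,
    C.exists_mem_bag_iff S.one_le S.le_n S.T_subset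
      (C.parent_mem S.cw_mem hbT)
      (C.bag_subset_bag_parent S.two_le S.le_n (S.rangeD_subset hbD) hy),
    expAdj_virtual_virtual (S.disjoint_bags_Vj j) (S.Vv_subset_Vj j hp) (S.h_mem_Vj hb),
    S.mem_Ej_iff_of_foreign (Finset.mem_union_left _ hp) hb, ← S.mem_Eprime_iff_parent hbT hp,
    Sym2.eq_swap (a := p), iff_self_or]
  exact fun hbl => (S.notMem_Vv_of_mem_verts ((C.seq (i - 1)).black_mem _ _ hbl).1 hp).elim

lemma expAdj_local_iff {j : Fin m} {x y : α} (hx : x ∈ C.bags (i - 1) (Tj j) ∪ Vv)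
    (hy : y ∈ C.bags (i - 1) (Tj j) ∪ Vv) :
    expAdj C i T Vv E x y ↔ expAdj C (i - 1) (Tj j) (Vj j) (Ej j) x y := by
  rcases Finset.mem_union.1 hx with hx | hx <;> rcases Finset.mem_union.1 hy with hy | hy
  · exact S.expAdj_bags_bags_iff hx hy
  · exact S.expAdj_bags_virtual_iff hx hy
  · rw [expAdj_comm, S.expAdj_bags_virtual_iff hy hx, expAdj_comm]
  · exact S.expAdj_virtual_virtual_iff hx hy

lemma f'_notMem_Tj {j : Fin m} {b : Fin k} (hb : f' b ∈ rangeD C i T f' \ Dj j) :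
    f' b ∉ Tj j := by
  obtain ⟨hbD, hbj⟩ := Finset.mem_sdiff.1 hb
  obtain ⟨l, hl⟩ := S.exists_mem_Dj hbD
  have hjl : j ≠ l := by rintro rfl; exact hbj hl
  exact fun hbT => Finset.disjoint_left.1 (S.disjoint_Tj hjl) hbT (S.Dj_subset_Tj l hl)

lemma ne_of_foreign {j : Fin m} {x y : α} (hx : x ∈ C.bags (i - 1) (Tj j) ∪ Vv) {b : Fin k}
    (hb : f' b ∈ rangeD C i T f' \ Dj j) (hy : y ∈ C.bag (i - 1) (f' b)) : x ≠ y ∧ x ≠ h b := by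
  have hbD := (Finset.mem_sdiff.1 hb).1
  refine ⟨?_, ?_⟩ <;> rintro rfl <;> rcases Finset.mem_union.1 hx with hx | hx
  · obtain ⟨u, hu, hxu⟩ := C.mem_bags.1 hx
    obtain rfl := C.eq_of_mem_bag S.one_le_sub_one S.sub_one_le (S.Tj_subset j hu)
      (S.rangeD_subset hbD) hxu hy
    exact S.f'_notMem_Tj hb hu
  · exact Finset.disjoint_left.1 S.disjoint_bags_Vv (S.bag_f'_subset_bags hbD hy) hx
  · exact S.h_notMem_verts hb le_rfl C.one_le (S.bags_Tj_subset_verts j hx)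
  · exact S.h_notMem_Vv hb hx

lemma oplus_cases [Nonempty α] (j : Fin m) (b : Fin k) :
    (bigOplus m sj fj Dj b ∈ C.bags (i - 1) (Tj j) ∪ Vv ∧ sj j b = bigOplus m sj fj Dj b) ∨
    (f' b ∈ rangeD C i T f' \ Dj j ∧ bigOplus m sj fj Dj b ∈ C.bag (i - 1) (f' b) ∧
      sj j b = h b) := by
  rcases S.mem_D_or_mem_Vv b with hb | hb
  · by_cases hbj : f' b ∈ Dj j
    · rw [S.oplus_eq_of_mem_Dj hbj]
      exact Or.inl ⟨Finset.mem_union_left _ (S.sj_mem_bags hbj), rfl⟩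
    · have hbD := S.f'_mem_rangeD hb
      obtain ⟨l, hl⟩ := S.exists_mem_Dj hbD
      rw [S.oplus_eq_of_mem_Dj hl]
      exact Or.inr ⟨Finset.mem_sdiff.2 ⟨hbD, hbj⟩, S.sj_mem_bag hl,
        S.sj_eq_h (Finset.mem_sdiff.2 ⟨hbD, hbj⟩)⟩
  · rw [S.oplus_eq_of_mem_Vv hb, S.sj_eq_of_mem_Vv hb]
    exact Or.inl ⟨Finset.mem_union_right _ hb, rfl⟩

lemma eq_oplus_iff [Nonempty α] {j : Fin m} {x : α} (hx : x ∈ C.bags (i - 1) (Tj j) ∪ Vv)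
    (b : Fin k) : x = bigOplus m sj fj Dj b ↔ x = sj j b := by
  rcases S.oplus_cases j b with ⟨-, hb⟩ | ⟨hb, hy, hsj⟩
  · rw [hb]
  · rw [hsj]
    exact iff_of_false (S.ne_of_foreign hx hb hy).1 (S.ne_of_foreign hx hb hy).2

lemma expAdj_oplus_iff [Nonempty α] {j : Fin m} {x : α} (hx : x ∈ C.bags (i - 1) (Tj j) ∪ Vv)
    (b : Fin k) : expAdj C i T Vv E x (bigOplus m sj fj Dj b) ↔
      expAdj C (i - 1) (Tj j) (Vj j) (Ej j) x (sj j b) := by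
  rcases S.oplus_cases j b with ⟨hloc, hb⟩ | ⟨hb, hy, hsj⟩
  · rw [hb]
    exact S.expAdj_local_iff hx hloc
  · rw [hsj]
    rcases Finset.mem_union.1 hx with hx | hx
    exacts [S.expAdj_bags_foreign_iff hx hb hy, S.expAdj_virtual_foreign_iff hx hb hy]

lemma exists_local_oplus [Nonempty α] (a : Fin k) :
    ∃ j, bigOplus m sj fj Dj a ∈ C.bags (i - 1) (Tj j) ∪ Vv ∧ sj j a = bigOplus m sj fj Dj a := by
  rcases S.mem_D_or_mem_Vv a with ha | ha
  · obtain ⟨j, hj⟩ := S.exists_mem_Dj (S.f'_mem_rangeD ha)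
    rw [S.oplus_eq_of_mem_Dj hj]
    exact ⟨j, Finset.mem_union_left _ (S.sj_mem_bags hj), rfl⟩
  · rw [S.oplus_eq_of_mem_Vv ha]
    exact ⟨⟨0, S.pos⟩, Finset.mem_union_right _ ha, S.sj_eq_of_mem_Vv ha _⟩

lemma oplus_eq_oplus_iff [Nonempty α] (a b : Fin k) :
    bigOplus m sj fj Dj a = bigOplus m sj fj Dj b ↔ h a = h b := by
  obtain ⟨j, hloc, hj⟩ := S.exists_local_oplus a
  rw [S.eq_oplus_iff hloc, ← hj]
  exact (S.sol j).2.1 a b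

lemma expAdj_oplus_oplus_iff [Nonempty α] (a b : Fin k) :
    expAdj C i T Vv E (bigOplus m sj fj Dj a) (bigOplus m sj fj Dj b) ↔ s(h a, h b) ∈ HE := by
  obtain ⟨j, hloc, hj⟩ := S.exists_local_oplus a
  rw [S.expAdj_oplus_iff hloc, ← hj]
  exact (S.sol j).2.2 a b

lemma oplus_mem_bag [Nonempty α] {a : Fin k} (ha : f a ∈ D) :
    bigOplus m sj fj Dj a ∈ C.bag i (f a) := by
  obtain ⟨j, hj⟩ := S.exists_mem_Dj (S.f'_mem_rangeD ha)
  rw [S.oplus_eq_of_mem_Dj hj, ← S.parent_f' ha]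
  exact C.bag_subset_bag_parent S.two_le S.le_n (S.rangeD_subset (S.f'_mem_rangeD ha))
    (S.sj_mem_bag hj)

theorem isVSolution [Nonempty α] : IsVSolution C i k T D Vv E f h HE (bigOplus m sj fj Dj) :=
  ⟨fun _ => ⟨S.oplus_eq_of_mem_Vv, S.oplus_mem_bag⟩, S.oplus_eq_oplus_iff,
    S.expAdj_oplus_oplus_iff⟩

lemma sat_iff [Nonempty α] {j : Fin m} {u : α} (hu : u ∈ C.bags (i - 1) (Tj j)) (φ : QF k) :
    QF.Sat (expAdj C i T Vv E) (Fin.snoc (bigOplus m sj fj Dj) u) φ ↔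
      QF.Sat (expAdj C (i - 1) (Tj j) (Vj j) (Ej j)) (Fin.snoc (sj j) u) φ := by
  have hloc : u ∈ C.bags (i - 1) (Tj j) ∪ Vv := Finset.mem_union_left _ hu
  refine QF.sat_snoc_congr (fun a b => (S.oplus_eq_oplus_iff a b).trans ((S.sol j).2.1 a b).symm)
    (fun a b => (S.expAdj_oplus_oplus_iff a b).trans ((S.sol j).2.2 a b).symm)
    (fun a => ?_) (fun a => ?_) (S.expAdj_oplus_iff hloc) (S.expAdj_local_iff hloc hloc) φ
  · rw [eq_comm, S.eq_oplus_iff hloc, eq_comm]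
  · rw [expAdj_comm, S.expAdj_oplus_iff hloc, expAdj_comm]

lemma vValue_eq [Nonempty α] {I : Type} [Fintype I] (ψ : I → QF k) :
    vValue ψ C i T Vv E (bigOplus m sj fj Dj) =
      ∑ j, vValue ψ C (i - 1) (Tj j) (Vj j) (Ej j) (sj j) := by
  unfold vValue
  rw [Finset.sum_comm]
  refine Finset.sum_congr rfl fun c _ => ?_
  rw [S.bags_eq]
  exact ncard_filter_biUnion _ S.pairwise_disjoint_bags _ _ fun j u hu => S.sat_iff hu (ψ c)

end OplusSetup

theorem oplus_solution_general {α : Type} [DecidableEq α] [Nonempty α] {n : ℕ}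
    (C : ContractionSeq α n) (d k : ℕ)
    {I : Type} [Fintype I] (ψ : I → QF k)
    (i : ℕ) (h2 : 2 ≤ i) (hin : i ≤ n)
    (T D Vv : Finset α) (E : Finset (Sym2 α)) (f h : Fin k → α)
    (HE : Finset (Sym2 α))
    (hπ : IsVirtualProfile C k d i T D Vv E f h HE) (hv : C.cw i ∈ T)
    (f' : Fin k → α) (hf' : VFCompat C i k f f')
    (m : ℕ) (Tj Dj Vj : Fin m → Finset α) (Ej : Fin m → Finset (Sym2 α))
    (fj : Fin m → Fin k → α)
    (hdec : IsVDecomp C k d i T D Vv E f h HE f' m Tj Dj Vj Ej fj)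
    (sj : Fin m → Fin k → α)
    (hsj : ∀ j, IsVSolution C (i - 1) k (Tj j) (Dj j) (Vj j) (Ej j) (fj j) h HE (sj j))
    (νj : Fin m → ℕ)
    (hν : ∀ j, νj j = vValue ψ C (i - 1) (Tj j) (Vj j) (Ej j) (sj j)) :
    IsVSolution C i k T D Vv E f h HE (bigOplus m sj fj Dj) ∧
    vValue ψ C i T Vv E (bigOplus m sj fj Dj) = ∑ j, νj j := by
  have S : OplusSetup C k d i T D Vv E f h HE f' m Tj Dj Vj Ej fj sj :=
    ⟨h2, hin, hπ, hv, hf', hdec, hsj⟩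
  simp only [hν]
  exact ⟨S.isVSolution, S.vValue_eq ψ⟩

/-- (Lemma 14.) Combining solutions of the profiles of an
`f'`-decomposition of a virtual `i`-profile `π` with `⊕` yields a solution of `π`,
whose value is the sum of the values of the combined solutions. -/
theorem oplus_solution {α : Type} [DecidableEq α] [Nonempty α] {n : ℕ}
    (C : ContractionSeq α n) (d k : ℕ) (hW : C.HasWidth d)
    {I : Type} [Fintype I] (ψ : I → QF k)
    (i : ℕ) (h2 : 2 ≤ i) (hin : i ≤ n)
    (T D Vv : Finset α) (E : Finset (Sym2 α)) (f h : Fin k → α)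
    (HE : Finset (Sym2 α))
    (hπ : IsVirtualProfile C k d i T D Vv E f h HE) (hv : C.cw i ∈ T)
    (f' : Fin k → α) (hf' : VFCompat C i k f f')
    (m : ℕ) (Tj Dj Vj : Fin m → Finset α) (Ej : Fin m → Finset (Sym2 α))
    (fj : Fin m → Fin k → α)
    (hdec : IsVDecomp C k d i T D Vv E f h HE f' m Tj Dj Vj Ej fj)
    (sj : Fin m → Fin k → α)
    (hsj : ∀ j, IsVSolution C (i - 1) k (Tj j) (Dj j) (Vj j) (Ej j) (fj j) h HE (sj j))
    (νj : Fin m → ℕ)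
    (hν : ∀ j, νj j = vValue ψ C (i - 1) (Tj j) (Vj j) (Ej j) (sj j)) :
    IsVSolution C i k T D Vv E f h HE (bigOplus m sj fj Dj) ∧
    vValue ψ C i T Vv E (bigOplus m sj fj Dj) = ∑ j, νj j :=
  oplus_solution_general C d k ψ i h2 hin T D Vv E f h HE hπ hv f' hf' m Tj Dj Vj Ej fj hdec sj hsj
    νj hν
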